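/- arXiv:cond-mat/0204055 — 3 statements merged into one kernel-verified Lean document; each statement's English description precedes it below -/
import Mathlib

section
/- Let G = (V, E) be a finite graph with edge weights w : E → ℝ and f(A) = c(A) + Σ_{e∈A} w(e). The maximum of f over all subsets A ⊆ E equals the maximum, over all Potts partitions P of V (partitions each of whose classes induces a connected subgraph of G), of the number of classes of P plus the total weight of the edges of E having both endpoints in a single class of P. (Here w is assumed nonnegative.) -/
/-!
The connected components of `(V, A)` form a Potts partition of `G` with `c(A)` classes whose
internal edges include `A`; since `w ≥ 0`, its value is at least `f(A)`. Conversely, if `P` is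
a Potts partition and `A` is the set of edges inside its classes, then the components of
`(V, A)` are exactly the classes of `P`, so `f(A)` equals the value of `P`. Hence both
maxima exist and coincide.
-/

open scoped Classical

noncomputable section

variable {V : Type*} [Fintype V] [DecidableEq V]

/-- The number of connected components of the spanning subgraph `(V, A)`. -/
def compCount (A : Finset (Sym2 V)) : ℕ :=
  Nat.card (SimpleGraph.fromEdgeSet (↑A : Set (Sym2 V))).ConnectedComponent

/-- `f(A) = c(A) + Σ_{e ∈ A} w(e)`. -/
def pottsFun (w : Sym2 V → ℝ) (A : Finset (Sym2 V)) : ℝ :=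
  (compCount A : ℝ) + ∑ e ∈ A, w e

/-- A family of vertex classes is a Potts partition (of its underlying vertex set)
for `G` when every class induces a connected subgraph of `G`. -/
def IsPotts (G : SimpleGraph V) (Q : Finset (Finset V)) : Prop :=
  ∀ X ∈ Q, (G.induce (↑X : Set V)).Connected

/-- The value of a partition: its number of classes plus the total weight of the edges
of `G` having both endpoints in a single class. -/
def partitionValue (G : SimpleGraph V) [DecidableRel G.Adj] (w : Sym2 V → ℝ)
    (Q : Finset (Finset V)) : ℝ :=
  (Q.card : ℝ) +
    ∑ e ∈ G.edgeFinset.filter (fun e => ∃ X ∈ Q, ∀ v ∈ e, v ∈ X), w e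

open Finset SimpleGraph

namespace Finpartition

lemma exists_mem_parts_forall_mem_iff (P : Finpartition (univ : Finset V)) (u v : V) :
    (∃ X ∈ P.parts, ∀ x ∈ s(u, v), x ∈ X) ↔ P.part u = P.part v := by
  simp only [Sym2.mem_iff, forall_eq_or_imp, forall_eq]
  constructor
  · rintro ⟨X, hX, hu, hv⟩
    rw [P.part_eq_of_mem hX hu, P.part_eq_of_mem hX hv]
  · intro h
    exact ⟨P.part u, P.part_mem.2 (mem_univ u), P.mem_part (mem_univ u),
      h ▸ P.mem_part (mem_univ v)⟩

lemma card_parts_eq_card_connectedComponent (P : Finpartition (univ : Finset V))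
    (H : SimpleGraph V) (h : ∀ u v, H.Reachable u v ↔ P.part u = P.part v) :
    #P.parts = Nat.card H.ConnectedComponent := by
  let f : H.ConnectedComponent → P.parts :=
    ConnectedComponent.lift (fun v => ⟨P.part v, P.part_mem.2 (mem_univ v)⟩)
      (fun u v p _ => Subtype.ext ((h u v).1 ⟨p⟩))
  have hf : Function.Bijective f := by
    constructor
    · refine ConnectedComponent.ind₂ fun u v huv => ConnectedComponent.sound ?_
      exact (h u v).2 (congrArg Subtype.val huv)
    · rintro ⟨X, hX⟩
      obtain ⟨v, hv⟩ := P.nonempty_of_mem_parts hX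
      exact ⟨H.connectedComponentMk v, Subtype.ext (P.part_eq_of_mem hX hv)⟩
  rw [Nat.card_eq_of_bijective f hf, Nat.card_eq_finsetCard]

end Finpartition

namespace SimpleGraph

def componentFinpartition (H : SimpleGraph V) : Finpartition (univ : Finset V) :=
  Finpartition.ofSetoid H.reachableSetoid

lemma mem_part_componentFinpartition_iff (H : SimpleGraph V) {u v : V} :
    v ∈ H.componentFinpartition.part u ↔ H.Reachable u v :=
  Finpartition.mem_part_ofSetoid_iff_rel

lemma part_componentFinpartition_eq_iff (H : SimpleGraph V) (u v : V) :
    H.componentFinpartition.part u = H.componentFinpartition.part v ↔ H.Reachable u v := by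
  rw [← H.componentFinpartition.mem_part_iff_part_eq_part (mem_univ u) (mem_univ v),
    mem_part_componentFinpartition_iff, reachable_comm]

lemma card_parts_componentFinpartition (H : SimpleGraph V) :
    #H.componentFinpartition.parts = Nat.card H.ConnectedComponent :=
  H.componentFinpartition.card_parts_eq_card_connectedComponent H
    fun u v => (H.part_componentFinpartition_eq_iff u v).symm

lemma coe_part_componentFinpartition (H : SimpleGraph V) (a : V) :
    (↑(H.componentFinpartition.part a) : Set V) = (H.connectedComponentMk a).supp := by
  ext v
  rw [mem_coe, mem_part_componentFinpartition_iff, ConnectedComponent.mem_supp_iff,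
    ConnectedComponent.eq, reachable_comm]

lemma isPotts_componentFinpartition {G H : SimpleGraph V} (hHG : H ≤ G) :
    IsPotts G H.componentFinpartition.parts := by
  intro X hX
  obtain ⟨a, ha⟩ := H.componentFinpartition.nonempty_of_mem_parts hX
  rw [← H.componentFinpartition.part_eq_of_mem hX ha, coe_part_componentFinpartition]
  exact (H.connectedComponentMk a).connected_toSimpleGraph.mono fun _ _ h => hHG h

end SimpleGraph

def internalEdges (G : SimpleGraph V) [DecidableRel G.Adj] (Q : Finset (Finset V)) :
    Finset (Sym2 V) :=
  G.edgeFinset.filter fun e => ∃ X ∈ Q, ∀ v ∈ e, v ∈ X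

lemma fromEdgeSet_internalEdges_adj (G : SimpleGraph V) [DecidableRel G.Adj]
    (P : Finpartition (univ : Finset V)) (u v : V) :
    (fromEdgeSet ↑(internalEdges G P.parts)).Adj u v ↔ G.Adj u v ∧ P.part u = P.part v := by
  rw [fromEdgeSet_adj, internalEdges, coe_filter, Set.mem_ofPred_eq, mem_edgeFinset,
    mem_edgeSet, P.exists_mem_parts_forall_mem_iff]
  exact ⟨fun h => h.1, fun h => ⟨h, h.1.ne⟩⟩

lemma reachable_fromEdgeSet_internalEdges_iff (G : SimpleGraph V) [DecidableRel G.Adj]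
    {P : Finpartition (univ : Finset V)} (hP : IsPotts G P.parts) (u v : V) :
    (fromEdgeSet ↑(internalEdges G P.parts)).Reachable u v ↔ P.part u = P.part v := by
  constructor
  · rintro ⟨p⟩
    induction p with
    | nil => rfl
    | cons h _ ih => exact ((fromEdgeSet_internalEdges_adj G P _ _).1 h).2.trans ih
  · intro h
    have hu : u ∈ P.part u := P.mem_part (mem_univ u)
    have hv : v ∈ P.part u := h ▸ P.mem_part (mem_univ v)
    let φ : G.induce (↑(P.part u) : Set V) →g fromEdgeSet ↑(internalEdges G P.parts) :=
      ⟨Subtype.val, fun {x y} hxy => (fromEdgeSet_internalEdges_adj G P x y).2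
        ⟨hxy, (P.part_eq_of_mem (P.part_mem.2 (mem_univ u)) x.2).trans
          (P.part_eq_of_mem (P.part_mem.2 (mem_univ u)) y.2).symm⟩⟩
    exact ((hP _ (P.part_mem.2 (mem_univ u))).preconnected ⟨u, hu⟩ ⟨v, hv⟩).map φ

lemma partitionValue_eq_pottsFun_internalEdges (G : SimpleGraph V) [DecidableRel G.Adj]
    (w : Sym2 V → ℝ) {P : Finpartition (univ : Finset V)} (hP : IsPotts G P.parts) :
    partitionValue G w P.parts = pottsFun w (internalEdges G P.parts) := by
  rw [partitionValue, pottsFun, compCount,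
    ← P.card_parts_eq_card_connectedComponent _ (reachable_fromEdgeSet_internalEdges_iff G hP)]
  rfl

lemma subset_internalEdges_componentFinpartition (G : SimpleGraph V) [DecidableRel G.Adj]
    {A : Finset (Sym2 V)} (hA : A ⊆ G.edgeFinset) :
    A ⊆ internalEdges G (fromEdgeSet (↑A : Set (Sym2 V))).componentFinpartition.parts := by
  intro e he
  refine mem_filter.2 ⟨hA he, ?_⟩
  induction e using Sym2.ind with
  | _ u v =>
    have hne : u ≠ v := (mem_edgeSet G).1 (mem_edgeFinset.1 (hA he)) |>.ne
    rw [Finpartition.exists_mem_parts_forall_mem_iff, part_componentFinpartition_eq_iff]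
    exact ((fromEdgeSet_adj _).2 ⟨he, hne⟩).reachable

lemma pottsFun_le_partitionValue_componentFinpartition (G : SimpleGraph V) [DecidableRel G.Adj]
    {w : Sym2 V → ℝ} (hw : ∀ e, 0 ≤ w e) {A : Finset (Sym2 V)} (hA : A ⊆ G.edgeFinset) :
    pottsFun w A ≤
      partitionValue G w (fromEdgeSet (↑A : Set (Sym2 V))).componentFinpartition.parts := by
  rw [pottsFun, partitionValue, card_parts_componentFinpartition, compCount]
  exact add_le_add le_rfl (sum_le_sum_of_subset_of_nonneg
    (subset_internalEdges_componentFinpartition G hA) fun e _ _ => hw e)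

/-- The maximum of `f(A) = c(A) + Σ_{e ∈ A} w(e)` over all subsets `A ⊆ E` equals the
maximum, over all Potts partitions `P` of `V` (partitions each of whose classes induces
a connected subgraph of `G`), of the number of classes of `P` plus the total weight of
the edges of `E` having both endpoints in a single class of `P`. -/
theorem max_pottsFun_eq_max_partitionValue (G : SimpleGraph V) [DecidableRel G.Adj]
    (w : Sym2 V → ℝ) (hw : ∀ e, 0 ≤ w e) :
    ∃ M : ℝ,
      IsGreatest {x : ℝ | ∃ A ⊆ G.edgeFinset, x = pottsFun w A} M ∧
      IsGreatest {x : ℝ | ∃ P : Finpartition (Finset.univ : Finset V),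
        IsPotts G P.parts ∧ x = partitionValue G w P.parts} M := by
  obtain ⟨A, hA, hmax⟩ :=
    G.edgeFinset.powerset.exists_max_image (pottsFun w) ⟨∅, empty_mem_powerset _⟩
  rw [mem_powerset] at hA
  have hbound : ∀ P : Finpartition (univ : Finset V), IsPotts G P.parts →
      partitionValue G w P.parts ≤ pottsFun w A := fun P hP => by
    rw [partitionValue_eq_pottsFun_internalEdges G w hP]
    exact hmax _ (mem_powerset.2 (filter_subset _ _))
  set P := (fromEdgeSet (↑A : Set (Sym2 V))).componentFinpartition
  have hP : IsPotts G P.parts := isPotts_componentFinpartition <| by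
    simpa only [coe_edgeFinset, fromEdgeSet_edgeSet] using fromEdgeSet_mono (coe_subset.2 hA)
  refine ⟨pottsFun w A, ⟨⟨A, hA, rfl⟩, ?_⟩, ⟨P, hP, ?_⟩, ?_⟩
  · rintro _ ⟨B, hB, rfl⟩
    exact hmax B (mem_powerset.2 hB)
  · exact le_antisymm (pottsFun_le_partitionValue_componentFinpartition G hw hA) (hbound P hP)
  · rintro _ ⟨Q, hQ, rfl⟩
    exact hbound Q hQ
end
end

section
/- Extension lemma: let G = (V, E) be a finite graph with edge weights w : E → ℝ, let x ∈ V, and let G' = G − x be the subgraph obtained by deleting x (edges keep their weights). If F' ⊆ E(G') maximizes f_{G'}(A) = c_{G'}(A) + Σ_{e∈A} w(e) over subsets A of E(G'), then there exists F ⊆ E maximizing f_G over subsets of E such that F' ⊆ F. -/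
open scoped Classical

noncomputable section

variable {V : Type*} [Fintype V] [DecidableEq V]

/-- The number of connected components of the spanning subgraph on the vertex set `S`
determined by the edge set `A` (isolated vertices count as components). -/
def compCountOn (S : Set V) (A : Finset (Sym2 V)) : ℕ :=
  Nat.card ((SimpleGraph.fromEdgeSet (↑A : Set (Sym2 V))).induce S).ConnectedComponent

/-- `f_{G-x}(A) = c_{G-x}(A) + Σ_{e ∈ A} w(e)` for a spanning subgraph of `G - x`,
whose vertex set is `V \ {x}`. -/
def pottsFunOn (S : Set V) (w : Sym2 V → ℝ) (A : Finset (Sym2 V)) : ℝ :=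
  (compCountOn S A : ℝ) + ∑ e ∈ A, w e

end

/-!
The component count is supermodular on graphs, `c G + c H ≤ c (G ⊓ H) + c (G ⊔ H)`: an edge that
merges two components of the larger graph also merges two components of the smaller one. Hence
`f_G` is supermodular on edge sets. Take any maximizer `F` of `f_G`. On edge sets avoiding `x` the
vertex `x` is isolated, so `f_G = f_{G-x} + 1` there; optimality of `F'` for `G - x` thus gives
`f_G (F ∩ F') ≤ f_G F'`, and supermodularity turns this into `f_G F ≤ f_G (F ∪ F')`.
-/

open SimpleGraph

lemma Nat.card_subtype_ne_add_one {α : Type*} [Finite α] (a : α) :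
    Nat.card {b // b ≠ a} + 1 = Nat.card α := by
  have := Fintype.ofFinite α
  simpa [Nat.card_eq_fintype_card, Fintype.card_subtype_compl] using
    Nat.sub_add_cancel (Fintype.card_pos_iff.2 ⟨a⟩)

namespace SimpleGraph

variable {V : Type*} {G G' : SimpleGraph V} {u v a b : V}

lemma Reachable.of_sup_edge (h : (G ⊔ edge u v).Reachable a b) :
    G.Reachable a b ∨ G.Reachable a u ∧ G.Reachable v b ∨ G.Reachable a v ∧ G.Reachable u b := by
  obtain ⟨p⟩ := h
  induction p with
  | nil => exact .inl .rfl
  | @cons a c b hadj _ ih =>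
    rcases hadj with hadj | hadj
    · have hac := hadj.reachable
      rcases ih with h | ⟨h₁, h₂⟩ | ⟨h₁, h₂⟩
      exacts [.inl (hac.trans h), .inr (.inl ⟨hac.trans h₁, h₂⟩), .inr (.inr ⟨hac.trans h₁, h₂⟩)]
    · obtain ⟨⟨rfl, rfl⟩ | ⟨rfl, rfl⟩, -⟩ := (edge_adj _ _ _ _).1 hadj <;>
        rcases ih with h | ⟨h₁, h₂⟩ | ⟨h₁, h₂⟩ <;> simp_all

lemma reachable_sup_edge_iff_of_reachable (huv : G.Reachable u v) :
    (G ⊔ edge u v).Reachable a b ↔ G.Reachable a b := by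
  refine ⟨fun h => ?_, fun h => h.mono le_sup_left⟩
  rcases h.of_sup_edge with h | ⟨h₁, h₂⟩ | ⟨h₁, h₂⟩
  exacts [h, h₁.trans (huv.trans h₂), h₁.trans (huv.symm.trans h₂)]

lemma card_connectedComponent_sup_edge_of_reachable (huv : G.Reachable u v) :
    Nat.card (G ⊔ edge u v).ConnectedComponent = Nat.card G.ConnectedComponent :=
  Nat.card_congr (Quot.congrRight fun _ _ => reachable_sup_edge_iff_of_reachable huv)

lemma card_connectedComponent_sup_edge_of_not_reachable [Finite V] (huv : ¬G.Reachable u v) :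
    Nat.card (G ⊔ edge u v).ConnectedComponent + 1 = Nat.card G.ConnectedComponent := by
  set φ := ConnectedComponent.map (Hom.ofLE (le_sup_left : G ≤ G ⊔ edge u v))
  have hne : u ≠ v := by rintro rfl; exact huv .rfl
  have hφuv : φ (G.connectedComponentMk u) = φ (G.connectedComponentMk v) :=
    ConnectedComponent.sound (Adj.reachable (Or.inr ((edge_adj ..).2 ⟨.inl ⟨rfl, rfl⟩, hne⟩)))
  -- only the components of `u` and `v` are merged, and that of `v` is still in the domain
  have hbij : Function.Bijective fun C : {C // C ≠ G.connectedComponentMk u} => φ C := by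
    refine ⟨fun ⟨C, hC⟩ ⟨D, hD⟩ h => ?_, fun C => ?_⟩
    · induction C using ConnectedComponent.ind with | _ a =>
      induction D using ConnectedComponent.ind with | _ b =>
      simp only [φ, ConnectedComponent.map_mk, Hom.coe_ofLE, id_eq, ConnectedComponent.eq] at h
      rcases h.of_sup_edge with h | ⟨h₁, -⟩ | ⟨-, h₂⟩
      exacts [Subtype.ext (ConnectedComponent.sound h), absurd (ConnectedComponent.sound h₁) hC,
        absurd (ConnectedComponent.sound h₂.symm) hD]
    · obtain ⟨C, rfl⟩ := ConnectedComponent.surjective_map_ofLE le_sup_left C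
      by_cases hC : C = G.connectedComponentMk u
      · refine ⟨⟨G.connectedComponentMk v, fun h => huv (ConnectedComponent.exact h).symm⟩, ?_⟩
        rw [hC]; exact hφuv.symm
      · exact ⟨⟨C, hC⟩, rfl⟩
  rw [← Nat.card_eq_of_bijective _ hbij, Nat.card_subtype_ne_add_one]

lemma card_connectedComponent_add_sup_edge_le [Finite V] (h : G ≤ G')
    (u v : V) :
    Nat.card G'.ConnectedComponent + Nat.card (G ⊔ edge u v).ConnectedComponent ≤
      Nat.card G.ConnectedComponent + Nat.card (G' ⊔ edge u v).ConnectedComponent := by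
  by_cases huv : G'.Reachable u v
  · rw [card_connectedComponent_sup_edge_of_reachable huv]
    have := ConnectedComponent.card_le_card_of_le (le_sup_left : G ≤ G ⊔ edge u v)
    omega
  · have := card_connectedComponent_sup_edge_of_not_reachable huv
    have := card_connectedComponent_sup_edge_of_not_reachable fun h' => huv (h'.mono h)
    omega

lemma card_connectedComponent_add_sup_fromEdgeSet_le [Finite V] (h : G ≤ G')
    (D : Finset (Sym2 V)) :
    Nat.card G'.ConnectedComponent + Nat.card (G ⊔ fromEdgeSet ↑D).ConnectedComponent ≤
      Nat.card G.ConnectedComponent + Nat.card (G' ⊔ fromEdgeSet ↑D).ConnectedComponent := by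
  induction D using Finset.induction_on with
  | empty => simp only [Finset.coe_empty, fromEdgeSet_empty, sup_bot_eq]; omega
  | insert e D _ ih =>
    induction e using Sym2.ind with | _ u v =>
    have hsplit : ∀ H : SimpleGraph V,
        H ⊔ fromEdgeSet ↑(insert s(u, v) D) = H ⊔ fromEdgeSet ↑D ⊔ edge u v := by
      intro H
      rw [Finset.coe_insert, Set.insert_eq, fromEdgeSet_union, edge, sup_comm (fromEdgeSet _),
        sup_assoc]
    rw [hsplit, hsplit]
    have := card_connectedComponent_add_sup_edge_le
      (sup_le_sup_right h (fromEdgeSet ↑D)) u v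
    omega

theorem card_connectedComponent_add_le_inf_add_sup [Finite V] (G H : SimpleGraph V) :
    Nat.card G.ConnectedComponent + Nat.card H.ConnectedComponent ≤
      Nat.card (G ⊓ H).ConnectedComponent + Nat.card (G ⊔ H).ConnectedComponent := by
  obtain ⟨D, hD⟩ := H.edgeSet.toFinite.exists_finset_coe
  have := card_connectedComponent_add_sup_fromEdgeSet_le (inf_le_left : G ⊓ H ≤ G) D
  rwa [hD, fromEdgeSet_edgeSet, sup_eq_right.2 inf_le_right] at this

lemma card_connectedComponent_eq_card_induce_add_one [Finite V] {x : V}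
    (hx : ∀ y, ¬G.Adj x y) :
    Nat.card G.ConnectedComponent = Nat.card (G.induce {v | v ≠ x}).ConnectedComponent + 1 := by
  have hreach : ∀ {a}, G.Reachable a x → a = x := by
    rintro a ⟨p⟩
    cases p.reverse with
    | nil => rfl
    | cons h _ => exact absurd h (hx _)
  set φ := ConnectedComponent.map (Embedding.induce (G := G) {v | v ≠ x}).toHom
  have hφ : ∀ C, φ C ≠ G.connectedComponentMk x := by
    refine ConnectedComponent.ind fun ⟨a, ha⟩ h => ha (hreach ?_)
    exact ConnectedComponent.exact h
  have hbij : Function.Bijective fun C => (⟨φ C, hφ C⟩ : {C // C ≠ G.connectedComponentMk x}) := by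
    refine ⟨fun C D h => ?_, fun ⟨C, hC⟩ => ?_⟩
    · induction C using ConnectedComponent.ind with | _ a =>
      induction D using ConnectedComponent.ind with | _ b =>
      obtain ⟨p⟩ := ConnectedComponent.exact (congrArg Subtype.val h)
      refine ConnectedComponent.sound ⟨p.induce _ fun y hy => ?_⟩
      rintro rfl
      exact a.2 (hreach (p.takeUntil y hy).reachable)
    · induction C using ConnectedComponent.ind with | _ v =>
      have hv : v ≠ x := by rintro rfl; exact hC rfl
      exact ⟨(G.induce _).connectedComponentMk ⟨v, hv⟩, rfl⟩
  rw [Nat.card_eq_of_bijective _ hbij, Nat.card_subtype_ne_add_one]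

end SimpleGraph

section Potts

variable {V : Type*} [Finite V]

lemma compCount_add_le_inter_add_union [DecidableEq V] (A B : Finset (Sym2 V)) :
    compCount A + compCount B ≤ compCount (A ∩ B) + compCount (A ∪ B) := by
  simpa only [compCount, Finset.coe_inter, Finset.coe_union, fromEdgeSet_inter,
    fromEdgeSet_union] using card_connectedComponent_add_le_inf_add_sup
      (fromEdgeSet (↑A : Set (Sym2 V))) (fromEdgeSet ↑B)

lemma pottsFun_add_le_inter_add_union [DecidableEq V] (w : Sym2 V → ℝ) (A B : Finset (Sym2 V)) :
    pottsFun w A + pottsFun w B ≤ pottsFun w (A ∩ B) + pottsFun w (A ∪ B) := by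
  have hsum := Finset.sum_union_inter (f := w) (s₁ := A) (s₂ := B)
  have hcount : (compCount A + compCount B : ℝ) ≤ compCount (A ∩ B) + compCount (A ∪ B) := by
    exact_mod_cast compCount_add_le_inter_add_union A B
  simp only [pottsFun]
  linarith

lemma pottsFun_eq_pottsFunOn_add_one (w : Sym2 V → ℝ) {x : V} {A : Finset (Sym2 V)}
    (hA : ∀ e ∈ A, x ∉ e) : pottsFun w A = pottsFunOn {v | v ≠ x} w A + 1 := by
  have hx : ∀ y, ¬(fromEdgeSet (↑A : Set (Sym2 V))).Adj x y :=
    fun y h => hA _ ((fromEdgeSet_adj _).1 h).1 (Sym2.mem_mk_left x y)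
  simp only [pottsFun, pottsFunOn, compCount, compCountOn,
    card_connectedComponent_eq_card_induce_add_one hx]
  push_cast
  ring

lemma pottsFun_le_pottsFun_union [DecidableEq V] (w : Sym2 V → ℝ) {x : V} {F' : Finset (Sym2 V)}
    (hF'x : ∀ e ∈ F', x ∉ e)
    (hopt : ∀ A ⊆ F', pottsFunOn {v | v ≠ x} w A ≤ pottsFunOn {v | v ≠ x} w F')
    (F : Finset (Sym2 V)) : pottsFun w F ≤ pottsFun w (F ∪ F') := by
  have hsuper := pottsFun_add_le_inter_add_union w F F'
  rw [pottsFun_eq_pottsFunOn_add_one w hF'x,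
    pottsFun_eq_pottsFunOn_add_one w fun e he => hF'x e (Finset.mem_inter.1 he).2] at hsuper
  linarith [hopt (F ∩ F') Finset.inter_subset_right]

end Potts

variable {V : Type*} [Fintype V] [DecidableEq V]

/-- Extension lemma: let `G = (V, E)` be a finite graph with edge weights `w`, `x ∈ V`,
and `G' = G - x` the graph obtained by deleting `x` (its edges are the edges of `G` not
containing `x`, with the same weights). If `F' ⊆ E(G')` maximizes
`f_{G'}(A) = c_{G'}(A) + Σ_{e ∈ A} w(e)` over subsets of `E(G')`, then there exists
`F ⊆ E` maximizing `f_G` over subsets of `E` with `F' ⊆ F`. -/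
theorem exists_optimal_extension (G : SimpleGraph V) [DecidableRel G.Adj]
    (w : Sym2 V → ℝ) (x : V)
    (F' : Finset (Sym2 V)) (hF' : F' ⊆ G.edgeFinset.filter (fun e => x ∉ e))
    (hopt : ∀ A ⊆ G.edgeFinset.filter (fun e => x ∉ e),
      pottsFunOn {v : V | v ≠ x} w A ≤ pottsFunOn {v : V | v ≠ x} w F') :
    ∃ F ⊆ G.edgeFinset, F' ⊆ F ∧ ∀ A ⊆ G.edgeFinset, pottsFun w A ≤ pottsFun w F := by
  obtain ⟨F, hFE, hFmax⟩ :=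
    Finset.exists_max_image G.edgeFinset.powerset (pottsFun w) ⟨∅, Finset.empty_mem_powerset _⟩
  have hF'x : ∀ e ∈ F', x ∉ e := fun e he => (Finset.mem_filter.1 (hF' he)).2
  refine ⟨F ∪ F', Finset.union_subset (Finset.mem_powerset.1 hFE)
    (hF'.trans (Finset.filter_subset _ _)), Finset.subset_union_right, fun A hA => ?_⟩
  exact (hFmax A (Finset.mem_powerset.2 hA)).trans
    (pottsFun_le_pottsFun_union w hF'x (fun A hA => hopt A (hA.trans hF')) F)
end

section
/- Main extension theorem: let G = (V, E) be a finite graph with edge weights w : E → ℝ, 0 ≤ w(e) for all e, let x ∈ V, and let F' be a set of edges of G − x maximizing f_{G−x}. Let P_G(F') be the partition of V whose classes are the vertex sets of the connected components of (V∖{x}, F') together with the singleton {x}. Then for any 𝒲 ⊆ P_G(F') containing {x} that minimizes |𝒲| − 1 − w(E(𝒲)) over all subsets of P_G(F') containing {x}, the edge set F* = F' ∪ E(𝒲) maximizes f_G over all subsets of E. -/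
open scoped Classical

noncomputable section

variable {V : Type*} [Fintype V] [DecidableEq V]

/-- `E(𝒲)`: the set of edges of `G` joining vertices belonging to two different members
of the collection `𝒲` of vertex sets. -/
def crossEdges (G : SimpleGraph V) [DecidableRel G.Adj] (𝒲 : Finset (Finset V)) :
    Finset (Sym2 V) :=
  G.edgeFinset.filter
    (fun e => ∃ X ∈ 𝒲, ∃ Y ∈ 𝒲, X ≠ Y ∧ ∃ i j, e = s(i, j) ∧ i ∈ X ∧ j ∈ Y)

/-- The partition of `V` into the vertex sets of the connected components of the
spanning graph `(V, A)`.  When the edges of `A` avoid `x`, this is exactly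
`P_G(A)`: the components of `(V \ {x}, A)` together with the singleton `{x}`. -/
def compPartition (A : Finset (Sym2 V)) : Finset (Finset V) :=
  Finset.univ.image fun v : V =>
    Finset.univ.filter fun u =>
      (SimpleGraph.fromEdgeSet (↑A : Set (Sym2 V))).Reachable u v

/-!
`c` is supermodular and `w` is modular, so `f` is supermodular; as `A ∩ F'` avoids `x`,
optimality of `F'` gives `f(A) ≤ f(A ∪ F')`. For `M ⊇ F'` let `U` be the `M`-component of `x`
and `𝒲'` the family of `F'`-classes inside `U`. Deleting from `M` the edges between distinct
members of `𝒲'` leaves an edge set avoiding `x` with `|𝒲'| - 1` more components, so optimality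
of `F'` gives `f(M) ≤ f(F') + 1 - |𝒲'| + w(E(𝒲'))`. Since `{x} ∈ 𝒲'`, minimality of `𝒲` lets us
replace `𝒲'` by `𝒲`, and adding `E(𝒲)` to `F'` merges at most the `|𝒲|` classes of `𝒲`, so
`f(F' ∪ E(𝒲)) ≥ f(F') + 1 - |𝒲| + w(E(𝒲))`.
-/

open SimpleGraph Finset

theorem SimpleGraph.Reachable.of_closed_adj {α : Type*} {H H' : SimpleGraph α} {P : α → Prop}
    (h : ∀ a b, H.Adj a b → P a → P b ∧ H'.Adj a b) {u v : α} (huv : H.Reachable u v)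
    (hu : P u) : P v ∧ H'.Reachable u v := by
  obtain ⟨p⟩ := huv
  induction p with
  | nil => exact ⟨hu, .rfl⟩
  | cons hadj _ ih =>
    obtain ⟨hb, hadj'⟩ := h _ _ hadj hu
    obtain ⟨hv, hr⟩ := ih hb
    exact ⟨hv, hadj'.reachable.trans hr⟩

theorem SimpleGraph.card_connectedComponent_eq_induce_add_one {α : Type*} [Finite α]
    (H : SimpleGraph α) {x : α} (hx : ∀ y, ¬ H.Adj x y) :
    Nat.card H.ConnectedComponent =
      Nat.card (H.induce {v | v ≠ x}).ConnectedComponent + 1 := by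
  set S : Set α := {v | v ≠ x}
  have eq_of_reachable_x : ∀ {v}, H.Reachable x v → v = x := by
    rintro v ⟨p⟩
    cases p with
    | nil => rfl
    | cons hadj _ => exact absurd hadj (hx _)
  have lift : ∀ u v : S, H.Reachable u v → (H.induce S).Reachable u v := by
    rintro u v ⟨p⟩
    refine ⟨p.induce S fun y hy hyx => ?_⟩
    subst hyx
    by_cases hp : p.Nil
    · simp only [Walk.nil_iff_support_eq.mp hp, List.mem_singleton] at hy
      exact u.2 hy.symm
    · obtain ⟨z, hz⟩ := adj_of_mem_walk_support p hp hy
      exact hx z hz.2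
  let φ : (H.induce S).ConnectedComponent ⊕ Unit → H.ConnectedComponent :=
    Sum.elim (ConnectedComponent.map (Embedding.induce S).toHom)
      fun _ => H.connectedComponentMk x
  have hφ : Function.Bijective φ := by
    refine ⟨?_, fun c => c.ind fun v => ?_⟩
    · rintro (c | ⟨⟩) (d | ⟨⟩) h
      · induction c using ConnectedComponent.ind
        induction d using ConnectedComponent.ind
        exact congrArg Sum.inl (ConnectedComponent.sound (lift _ _ (ConnectedComponent.exact h)))
      · induction c using ConnectedComponent.ind with | h v =>
        exact absurd (eq_of_reachable_x (ConnectedComponent.exact h).symm) v.2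
      · induction d using ConnectedComponent.ind with | h v =>
        exact absurd (eq_of_reachable_x (ConnectedComponent.exact h)) v.2
      · rfl
    · by_cases hv : v = x
      · exact ⟨.inr (), by rw [hv]; rfl⟩
      · exact ⟨.inl ((H.induce S).connectedComponentMk ⟨v, hv⟩), rfl⟩
  rw [← Nat.card_eq_of_bijective φ hφ, Nat.card_sum, Nat.card_unique (α := Unit)]

omit [DecidableEq V] in
theorem compCount_eq_compCountOn_add_one {X : Finset (Sym2 V)} {x : V} (hX : ∀ e ∈ X, x ∉ e) :
    compCount X = compCountOn {v | v ≠ x} X + 1 :=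
  card_connectedComponent_eq_induce_add_one _ fun y hxy =>
    hX _ ((fromEdgeSet_adj _).mp hxy).1 (Sym2.mem_mk_left x y)

omit [DecidableEq V] in
theorem pottsFunOn_eq_pottsFun_sub_one (w : Sym2 V → ℝ) {X : Finset (Sym2 V)} {x : V}
    (hX : ∀ e ∈ X, x ∉ e) : pottsFunOn {v | v ≠ x} w X = pottsFun w X - 1 := by
  rw [pottsFunOn, pottsFun, compCount_eq_compCountOn_add_one hX]
  push_cast
  ring

/-- `compPartition X` unfolds to `univ.image (compClass X)`. -/
def compClass (X : Finset (Sym2 V)) (v : V) : Finset V :=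
  Finset.univ.filter fun u => (SimpleGraph.fromEdgeSet (↑X : Set (Sym2 V))).Reachable u v

section compClass

variable {X Y : Finset (Sym2 V)} {u v : V}

@[simp]
theorem mem_compClass : u ∈ compClass X v ↔ (fromEdgeSet (X : Set (Sym2 V))).Reachable u v := by
  simp [compClass]

theorem self_mem_compClass : v ∈ compClass X v :=
  mem_compClass.mpr .rfl

theorem compClass_eq_iff :
    compClass X u = compClass X v ↔ (fromEdgeSet (X : Set (Sym2 V))).Reachable u v := by
  refine ⟨fun h => mem_compClass.mp (h ▸ self_mem_compClass), fun h => ?_⟩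
  ext z
  simp only [mem_compClass]
  exact ⟨fun hz => hz.trans h, fun hz => hz.trans h.symm⟩

theorem compClass_eq_of_mem (h : u ∈ compClass X v) : compClass X u = compClass X v :=
  compClass_eq_iff.mpr (mem_compClass.mp h)

theorem compClass_mono (h : X ⊆ Y) : compClass X v ⊆ compClass Y v := fun u hu =>
  mem_compClass.mpr ((mem_compClass.mp hu).mono (fromEdgeSet_mono (by exact_mod_cast h)))

theorem compClass_mem_compPartition (X : Finset (Sym2 V)) (v : V) :
    compClass X v ∈ compPartition X :=
  mem_image_of_mem _ (mem_univ v)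

theorem mem_compPartition {c : Finset V} : c ∈ compPartition X ↔ ∃ v, compClass X v = c := by
  simp [compPartition, compClass]

theorem eq_compClass_of_mem {c : Finset V} (hc : c ∈ compPartition X) (hu : u ∈ c) :
    c = compClass X u := by
  obtain ⟨v, rfl⟩ := mem_compPartition.mp hc
  exact (compClass_eq_of_mem hu).symm

theorem compClass_eq_singleton {x : V} (hX : ∀ e ∈ X, x ∉ e) : compClass X x = {x} := by
  ext u
  refine ⟨fun hu => ?_, fun hu => (mem_singleton.mp hu).symm ▸ self_mem_compClass⟩
  obtain ⟨p⟩ := (mem_compClass.mp hu).symm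
  cases p with
  | nil => exact mem_singleton_self _
  | cons hadj _ => exact absurd (Sym2.mem_mk_left _ _) (hX _ ((fromEdgeSet_adj _).mp hadj).1)

theorem compCount_eq_card_compPartition (X : Finset (Sym2 V)) :
    compCount X = (compPartition X).card := by
  set H := fromEdgeSet (X : Set (Sym2 V))
  let g : H.ConnectedComponent → Finset V :=
    ConnectedComponent.lift (compClass X) fun _ _ p _ => compClass_eq_iff.mpr ⟨p⟩
  have hg : Function.Injective g := fun c d =>
    ConnectedComponent.ind₂ (fun _ _ h => ConnectedComponent.sound (compClass_eq_iff.mp h)) c d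
  have himage : compPartition X = univ.image g := by
    ext c
    simp only [mem_compPartition, mem_image, mem_univ, true_and]
    exact ⟨fun ⟨v, hv⟩ => ⟨H.connectedComponentMk v, hv⟩,
      fun ⟨d, hd⟩ => d.ind (fun v hv => ⟨v, hv⟩) hd⟩
  rw [himage, card_image_of_injective _ hg, card_univ, compCount, Nat.card_eq_fintype_card]

end compClass

theorem mk_mem_crossEdges_iff {G : SimpleGraph V} [DecidableRel G.Adj] {F : Finset (Sym2 V)}
    {𝒲 : Finset (Finset V)} (h𝒲 : 𝒲 ⊆ compPartition F) {a b : V} :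
    s(a, b) ∈ crossEdges G 𝒲 ↔ G.Adj a b ∧ compClass F a ∈ 𝒲 ∧ compClass F b ∈ 𝒲 ∧
      compClass F a ≠ compClass F b := by
  simp only [crossEdges, mem_filter, mem_edgeFinset, mem_edgeSet]
  refine and_congr_right fun _ => ⟨?_, fun ⟨ha, hb, hab⟩ =>
    ⟨_, ha, _, hb, hab, a, b, rfl, self_mem_compClass, self_mem_compClass⟩⟩
  rintro ⟨X, hX, Y, hY, hXY, i, j, hij, hi, hj⟩
  obtain rfl := eq_compClass_of_mem (h𝒲 hX) hi
  obtain rfl := eq_compClass_of_mem (h𝒲 hY) hj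
  rcases Sym2.eq_iff.mp hij with ⟨rfl, rfl⟩ | ⟨rfl, rfl⟩
  · exact ⟨hX, hY, hXY⟩
  · exact ⟨hY, hX, hXY.symm⟩

theorem disjoint_crossEdges {G : SimpleGraph V} [DecidableRel G.Adj] {F : Finset (Sym2 V)}
    {𝒲 : Finset (Finset V)} (h𝒲 : 𝒲 ⊆ compPartition F) : Disjoint F (crossEdges G 𝒲) := by
  refine disjoint_left.mpr fun e heF he => ?_
  induction e using Sym2.ind with | h a b =>
  obtain ⟨hab, -, -, hne⟩ := (mk_mem_crossEdges_iff h𝒲).mp he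
  exact hne (compClass_eq_iff.mpr ((fromEdgeSet_adj _).mpr ⟨heF, hab.ne⟩).reachable)

section insertEdge

variable {X Y : Finset (Sym2 V)} {a b v : V}

theorem mem_compClass_of_adj (hab : (fromEdgeSet (X : Set (Sym2 V))).Adj a b)
    (ha : a ∈ compClass X v) : b ∈ compClass X v :=
  mem_compClass.mpr (hab.symm.reachable.trans (mem_compClass.mp ha))

theorem compClass_insert_of_notMem (ha : a ∉ compClass X v) (hb : b ∉ compClass X v) :
    compClass (insert s(a, b) X) v = compClass X v := by
  refine Subset.antisymm (fun u hu => ?_) (compClass_mono (subset_insert _ _))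
  refine ((mem_compClass.mp hu).symm.of_closed_adj (H' := fromEdgeSet (X : Set (Sym2 V)))
    (P := (· ∈ compClass X v)) (fun c d hcd hc => ?_) self_mem_compClass).1
  obtain ⟨hcd, hne⟩ := (fromEdgeSet_adj _).mp hcd
  have hcdX : s(c, d) ∈ X := by
    rcases mem_insert.mp hcd with h | h
    · rcases Sym2.eq_iff.mp h with ⟨rfl, rfl⟩ | ⟨rfl, rfl⟩ <;> contradiction
    · exact h
  have hadj : (fromEdgeSet (X : Set (Sym2 V))).Adj c d := (fromEdgeSet_adj _).mpr ⟨hcdX, hne⟩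
  exact ⟨mem_compClass_of_adj hadj hc, hadj⟩

/-- Adding the edge `ab` merges the classes of `a` and `b` and keeps all others. -/
theorem compCount_add_one_eq (X : Finset (Sym2 V)) (a b : V) :
    compCount X + 1 =
      compCount (insert s(a, b) X) + ({compClass X a, compClass X b} : Finset (Finset V)).card := by
  set Y := insert s(a, b) X
  set R := (compPartition X).filter fun c => a ∉ c ∧ b ∉ c
  have hY_ab : (fromEdgeSet (Y : Set (Sym2 V))).Reachable a b := by
    by_cases hab : a = b
    · exact hab ▸ .rfl
    · exact ((fromEdgeSet_adj _).mpr ⟨by simp [Y], hab⟩).reachable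
  have hR : ∀ c ∈ R, c ∈ compPartition Y := by
    intro c hc
    obtain ⟨hcX, hac, hbc⟩ := mem_filter.mp hc
    obtain ⟨v, rfl⟩ := mem_compPartition.mp hcX
    exact compClass_insert_of_notMem hac hbc ▸ compClass_mem_compPartition Y v
  have hX : compPartition X = R ∪ {compClass X a, compClass X b} := by
    ext c
    simp only [R, mem_union, mem_filter, mem_insert, mem_singleton]
    refine ⟨fun hc => ?_, ?_⟩
    · by_cases hac : a ∈ c
      · exact .inr (.inl (eq_compClass_of_mem hc hac))
      by_cases hbc : b ∈ c
      · exact .inr (.inr (eq_compClass_of_mem hc hbc))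
      exact .inl ⟨hc, hac, hbc⟩
    · rintro (⟨hc, -⟩ | rfl | rfl) <;> first | exact hc | exact compClass_mem_compPartition _ _
  have hY : compPartition Y = insert (compClass Y a) R := by
    ext c
    refine ⟨fun hc => ?_, fun hc => ?_⟩
    · obtain ⟨v, rfl⟩ := mem_compPartition.mp hc
      by_cases hav : a ∈ compClass Y v
      · exact compClass_eq_of_mem hav ▸ mem_insert_self _ _
      by_cases hbv : b ∈ compClass Y v
      · rw [← compClass_eq_of_mem hbv, compClass_eq_iff.mpr hY_ab.symm]
        exact mem_insert_self _ _
      have hav' : a ∉ compClass X v := fun h => hav (compClass_mono (subset_insert _ _) h)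
      have hbv' : b ∉ compClass X v := fun h => hbv (compClass_mono (subset_insert _ _) h)
      rw [compClass_insert_of_notMem hav' hbv']
      exact mem_insert_of_mem (mem_filter.mpr ⟨compClass_mem_compPartition _ _, hav', hbv'⟩)
    · rcases mem_insert.mp hc with rfl | hc
      · exact compClass_mem_compPartition _ _
      · exact hR c hc
  have hRX : Disjoint R {compClass X a, compClass X b} := by
    refine disjoint_left.mpr fun c hc hc' => ?_
    obtain ⟨-, hac, hbc⟩ := mem_filter.mp hc
    rcases mem_insert.mp hc' with rfl | hc'
    · exact hac self_mem_compClass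
    · exact hbc (mem_singleton.mp hc' ▸ self_mem_compClass)
  have hRY : compClass Y a ∉ R := fun h => (mem_filter.mp h).2.1 self_mem_compClass
  rw [compCount_eq_card_compPartition, compCount_eq_card_compPartition, hX, hY,
    card_union_of_disjoint hRX, card_insert_of_notMem hRY]
  omega

theorem compCount_insert_supermod (hXY : X ⊆ Y) (e : Sym2 V) :
    compCount (insert e X) + compCount Y ≤ compCount (insert e Y) + compCount X := by
  induction e using Sym2.ind with | h a b =>
  have hpair : ({compClass Y a, compClass Y b} : Finset (Finset V)).card ≤
      ({compClass X a, compClass X b} : Finset (Finset V)).card := by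
    by_cases h : compClass X a = compClass X b
    · have h' : compClass Y a = compClass Y b := compClass_eq_iff.mpr
        ((compClass_eq_iff.mp h).mono (fromEdgeSet_mono (by exact_mod_cast hXY)))
      rw [h, h', pair_eq_singleton, pair_eq_singleton, card_singleton, card_singleton]
    · rw [card_pair h]
      exact card_le_two
  have := compCount_add_one_eq X a b
  have := compCount_add_one_eq Y a b
  omega

theorem compCount_union_supermod (hXY : X ⊆ Y) (D : Finset (Sym2 V)) :
    compCount (X ∪ D) + compCount Y ≤ compCount (Y ∪ D) + compCount X := by
  induction D using Finset.induction_on with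
  | empty => simp only [union_empty, add_comm, le_refl]
  | insert e D _ ih =>
    rw [union_insert, union_insert]
    have := compCount_insert_supermod (union_subset_union_left (t := D) hXY) e
    omega

end insertEdge

theorem compCount_add_compCount_le (S T : Finset (Sym2 V)) :
    compCount S + compCount T ≤ compCount (S ∪ T) + compCount (S ∩ T) := by
  simpa only [union_eq_right.mpr inter_subset_left, union_comm T S] using
    compCount_union_supermod (inter_subset_right (s₁ := S) (s₂ := T)) S

theorem pottsFun_add_pottsFun_le (w : Sym2 V → ℝ) (S T : Finset (Sym2 V)) :
    pottsFun w S + pottsFun w T ≤ pottsFun w (S ∪ T) + pottsFun w (S ∩ T) := by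
  have hc : (compCount S + compCount T : ℝ) ≤ compCount (S ∪ T) + compCount (S ∩ T) := by
    exact_mod_cast compCount_add_compCount_le S T
  have hw := sum_union_inter (s₁ := S) (s₂ := T) (f := w)
  simp only [pottsFun]
  linarith

theorem exists_mem_of_mem_crossEdges {G : SimpleGraph V} [DecidableRel G.Adj]
    {𝒲 : Finset (Finset V)} {e : Sym2 V} (he : e ∈ crossEdges G 𝒲) {a : V} (ha : a ∈ e) :
    ∃ Z ∈ 𝒲, a ∈ Z := by
  obtain ⟨-, X, hX, Y, hY, -, i, j, rfl, hi, hj⟩ := mem_filter.mp he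
  rcases Sym2.mem_iff.mp ha with rfl | rfl
  exacts [⟨X, hX, hi⟩, ⟨Y, hY, hj⟩]

theorem compClass_subset_of_mem {F M : Finset (Sym2 V)} (hFM : F ⊆ M) {x v : V}
    (hv : v ∈ compClass M x) : compClass F v ⊆ compClass M x :=
  compClass_eq_of_mem hv ▸ compClass_mono hFM

/-- Edges touching only members of `𝒲` can merge those `|𝒲|` classes, but no others. -/
theorem compCount_add_one_le_union_add_card {F K : Finset (Sym2 V)} {𝒲 : Finset (Finset V)}
    (h𝒲 : 𝒲 ⊆ compPartition F) (hne : 𝒲.Nonempty) (hK : ∀ e ∈ K, ∀ a ∈ e, ∃ Z ∈ 𝒲, a ∈ Z) :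
    compCount F + 1 ≤ compCount (F ∪ K) + 𝒲.card := by
  set N := F ∪ K
  have hfix : ∀ v, compClass F v ∉ 𝒲 → compClass N v = compClass F v := by
    refine fun v hv => Subset.antisymm (fun u hu => ?_) (compClass_mono subset_union_left)
    refine ((mem_compClass.mp hu).symm.of_closed_adj (P := (· ∈ compClass F v))
      (fun a b hab ha => ⟨?_, hab⟩) self_mem_compClass).1
    obtain ⟨hab, hne⟩ := (fromEdgeSet_adj _).mp hab
    rcases mem_union.mp hab with hab | hab
    · exact mem_compClass_of_adj ((fromEdgeSet_adj _).mpr ⟨hab, hne⟩) ha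
    · obtain ⟨Z, hZ, haZ⟩ := hK _ hab a (Sym2.mem_mk_left a b)
      rw [eq_compClass_of_mem (h𝒲 hZ) haZ, compClass_eq_of_mem ha] at hZ
      exact absurd hZ hv
  obtain ⟨Z₀, hZ₀⟩ := hne
  obtain ⟨v₀, rfl⟩ := mem_compPartition.mp (h𝒲 hZ₀)
  have hsub : insert (compClass N v₀) (compPartition F \ 𝒲) ⊆ compPartition N := by
    refine insert_subset (compClass_mem_compPartition _ _) fun c hc => ?_
    obtain ⟨hcF, hc𝒲⟩ := mem_sdiff.mp hc
    obtain ⟨v, rfl⟩ := mem_compPartition.mp hcF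
    exact hfix v hc𝒲 ▸ compClass_mem_compPartition _ _
  have hnotMem : compClass N v₀ ∉ compPartition F \ 𝒲 := by
    intro h
    obtain ⟨hF, h𝒲'⟩ := mem_sdiff.mp h
    exact h𝒲' (eq_compClass_of_mem hF self_mem_compClass ▸ hZ₀)
  have := card_le_card hsub
  rw [card_insert_of_notMem hnotMem] at this
  have := card_sdiff_add_card_eq_card h𝒲
  rw [compCount_eq_card_compPartition, compCount_eq_card_compPartition]
  omega

section split

variable {G : SimpleGraph V} [DecidableRel G.Adj] {F M : Finset (Sym2 V)}

/-- Removing from `M` the edges between distinct `F`-classes inside the `M`-class `U` of `x`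
splits `U` into those `F`-classes and leaves the other `M`-classes intact. -/
theorem compCount_filter_notMem_crossEdges_add_one (hFM : F ⊆ M) (hMG : M ⊆ G.edgeFinset)
    (x : V) :
    compCount (M.filter (· ∉ crossEdges G ((compPartition F).filter (· ⊆ compClass M x)))) + 1 =
      ((compPartition F).filter (· ⊆ compClass M x)).card + compCount M := by
  set U := compClass M x
  set W' := (compPartition F).filter (· ⊆ U)
  set N := M.filter (· ∉ crossEdges G W')
  have hW' : W' ⊆ compPartition F := filter_subset _ _
  have hclass : ∀ {v}, v ∈ U → compClass F v ∈ W' := fun hv =>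
    mem_filter.mpr ⟨compClass_mem_compPartition _ _, compClass_subset_of_mem hFM hv⟩
  have hFN : F ⊆ N := fun e he =>
    mem_filter.mpr ⟨hFM he, disjoint_left.mp (disjoint_crossEdges hW') he⟩
  have hin : ∀ v ∈ U, compClass N v = compClass F v := by
    refine fun v hv => Subset.antisymm (fun u hu => ?_) (compClass_mono hFN)
    refine ((mem_compClass.mp hu).symm.of_closed_adj (P := (· ∈ compClass F v))
      (fun a b hab ha => ⟨?_, hab⟩) self_mem_compClass).1
    obtain ⟨hab, hne⟩ := (fromEdgeSet_adj _).mp hab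
    obtain ⟨habM, hcross⟩ := mem_filter.mp hab
    have haU : a ∈ U := compClass_subset_of_mem hFM hv ha
    have hbU : b ∈ U := mem_compClass_of_adj ((fromEdgeSet_adj _).mpr ⟨habM, hne⟩) haU
    have hsame : compClass F a = compClass F b := by
      by_contra h
      exact hcross ((mk_mem_crossEdges_iff hW').mpr
        ⟨mem_edgeFinset.mp (hMG habM), hclass haU, hclass hbU, h⟩)
    rw [← compClass_eq_of_mem ha, hsame]
    exact self_mem_compClass
  have hout : ∀ v ∉ U, compClass N v = compClass M v := by
    refine fun v hv => Subset.antisymm (compClass_mono (filter_subset _ _)) fun u hu => ?_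
    refine mem_compClass.mpr ((mem_compClass.mp hu).symm.of_closed_adj (P := (· ∉ U))
      (fun a b hab ha => ?_) hv).2.symm
    obtain ⟨habM, hne⟩ := (fromEdgeSet_adj _).mp hab
    refine ⟨fun hb => ha (mem_compClass_of_adj hab.symm hb), (fromEdgeSet_adj _).mpr
      ⟨mem_filter.mpr ⟨habM, fun hcross => ha ?_⟩, hne⟩⟩
    exact (mem_filter.mp ((mk_mem_crossEdges_iff hW').mp hcross).2.1).2 self_mem_compClass
  have hP : compPartition N = W' ∪ (compPartition M).erase U := by
    ext c
    simp only [mem_union, mem_erase]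
    refine ⟨fun hc => ?_, ?_⟩
    · obtain ⟨v, rfl⟩ := mem_compPartition.mp hc
      by_cases hv : v ∈ U
      · exact .inl (hin v hv ▸ hclass hv)
      · refine .inr ⟨fun h => hv ?_, hout v hv ▸ compClass_mem_compPartition _ _⟩
        exact h ▸ self_mem_compClass
    · rintro (hc | ⟨hcU, hc⟩)
      · obtain ⟨hcF, hcsub⟩ := mem_filter.mp hc
        obtain ⟨v, rfl⟩ := mem_compPartition.mp hcF
        exact hin v (hcsub self_mem_compClass) ▸ compClass_mem_compPartition _ _
      · obtain ⟨v, rfl⟩ := mem_compPartition.mp hc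
        have hv : v ∉ U := fun hv => hcU (compClass_eq_of_mem hv)
        exact hout v hv ▸ compClass_mem_compPartition _ _
  have hdisj : Disjoint W' ((compPartition M).erase U) := by
    refine disjoint_left.mpr fun c hc hc' => ?_
    obtain ⟨hcU, hcM⟩ := mem_erase.mp hc'
    obtain ⟨v, rfl⟩ := mem_compPartition.mp hcM
    exact hcU (compClass_eq_of_mem ((mem_filter.mp hc).2 self_mem_compClass))
  have hU : U ∈ compPartition M := compClass_mem_compPartition M x
  rw [compCount_eq_card_compPartition, compCount_eq_card_compPartition, hP,
    card_union_of_disjoint hdisj, ← card_erase_add_one hU]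
  omega

end split

theorem pottsFun_le_pottsFun_union_s11 {w : Sym2 V → ℝ} {B F : Finset (Sym2 V)} (hFB : F ⊆ B)
    (hmax : ∀ A ⊆ B, pottsFun w A ≤ pottsFun w F) (A : Finset (Sym2 V)) :
    pottsFun w A ≤ pottsFun w (A ∪ F) := by
  have := pottsFun_add_pottsFun_le w A F
  have := hmax (A ∩ F) (inter_subset_right.trans hFB)
  linarith

theorem pottsFun_add_card_le {G : SimpleGraph V} [DecidableRel G.Adj] {w : Sym2 V → ℝ}
    (hw : ∀ e, 0 ≤ w e) {x : V} {F M : Finset (Sym2 V)}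
    (hmax : ∀ A ⊆ G.edgeFinset.filter (x ∉ ·), pottsFun w A ≤ pottsFun w F)
    (hFx : ∀ e ∈ F, x ∉ e) (hFM : F ⊆ M) (hMG : M ⊆ G.edgeFinset) :
    pottsFun w M + ((compPartition F).filter (· ⊆ compClass M x)).card ≤
      pottsFun w F + 1 + ∑ e ∈ crossEdges G ((compPartition F).filter (· ⊆ compClass M x)), w e := by
  set U := compClass M x
  set W' := (compPartition F).filter (· ⊆ U)
  set N := M.filter (· ∉ crossEdges G W')
  have hxU : x ∈ U := self_mem_compClass
  have hN : N ⊆ G.edgeFinset.filter (x ∉ ·) := by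
    refine fun e he => mem_filter.mpr ⟨hMG (mem_filter.mp he).1, fun hxe => ?_⟩
    obtain ⟨heM, hcross⟩ := mem_filter.mp he
    obtain ⟨u, rfl⟩ := Sym2.mem_iff_exists.mp hxe
    have hxu : G.Adj x u := mem_edgeFinset.mp (hMG heM)
    have huU : u ∈ U := mem_compClass_of_adj ((fromEdgeSet_adj _).mpr ⟨heM, hxu.ne⟩) hxU
    have hclass : ∀ {v}, v ∈ U → compClass F v ∈ W' := fun hv =>
      mem_filter.mpr ⟨compClass_mem_compPartition _ _, compClass_subset_of_mem hFM hv⟩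
    refine hcross ((mk_mem_crossEdges_iff (filter_subset _ _)).mpr
      ⟨hxu, hclass hxU, hclass huU, fun h => hxu.ne ?_⟩)
    have hu : u ∈ compClass F x := h ▸ self_mem_compClass
    rw [compClass_eq_singleton hFx] at hu
    exact (mem_singleton.mp hu).symm
  have hcount := compCount_filter_notMem_crossEdges_add_one (G := G) hFM hMG x
  have hopt := hmax N hN
  have hsum : ∑ e ∈ M, w e = ∑ e ∈ N, w e + ∑ e ∈ M.filter (· ∈ crossEdges G W'), w e := by
    rw [add_comm, sum_filter_add_sum_filter_not]
  have hcross : ∑ e ∈ M.filter (· ∈ crossEdges G W'), w e ≤ ∑ e ∈ crossEdges G W', w e :=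
    sum_le_sum_of_subset_of_nonneg (fun e he => (mem_filter.mp he).2) fun e _ _ => hw e
  have hcount' : (compCount N : ℝ) + 1 = W'.card + compCount M := by exact_mod_cast hcount
  simp only [pottsFun] at hopt ⊢
  linarith

/-- Main extension theorem: let `G = (V, E)` have nonnegative edge weights, `x ∈ V`,
and let `F'` be a set of edges of `G - x` maximizing `f_{G-x}`.  Let `P_G(F')` be the
partition of `V` consisting of the vertex sets of the connected components of
`(V \ {x}, F')` together with `{x}`.  Then for any `𝒲 ⊆ P_G(F')` containing `{x}`
minimizing `|𝒲| - 1 - w(E(𝒲))` over subsets of `P_G(F')` containing `{x}`, the edge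
set `F* = F' ∪ E(𝒲)` maximizes `f_G` over all subsets of `E`. -/
theorem optimal_extension_step (G : SimpleGraph V) [DecidableRel G.Adj]
    (w : Sym2 V → ℝ) (hw : ∀ e, 0 ≤ w e) (x : V)
    (F' : Finset (Sym2 V)) (hF' : F' ⊆ G.edgeFinset.filter (fun e => x ∉ e))
    (hopt : ∀ A ⊆ G.edgeFinset.filter (fun e => x ∉ e),
      pottsFunOn {v : V | v ≠ x} w A ≤ pottsFunOn {v : V | v ≠ x} w F')
    (𝒲 : Finset (Finset V)) (h𝒲 : 𝒲 ⊆ compPartition F')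
    (hx𝒲 : ({x} : Finset V) ∈ 𝒲)
    (hmin : ∀ 𝒲' ⊆ compPartition F', ({x} : Finset V) ∈ 𝒲' →
      (𝒲.card : ℝ) - 1 - ∑ e ∈ crossEdges G 𝒲, w e ≤
        (𝒲'.card : ℝ) - 1 - ∑ e ∈ crossEdges G 𝒲', w e) :
    F' ∪ crossEdges G 𝒲 ⊆ G.edgeFinset ∧
    ∀ A ⊆ G.edgeFinset, pottsFun w A ≤ pottsFun w (F' ∪ crossEdges G 𝒲) := by
  have hF'x : ∀ e ∈ F', x ∉ e := fun e he => (mem_filter.mp (hF' he)).2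
  have hF'G : F' ⊆ G.edgeFinset := hF'.trans (filter_subset _ _)
  have hmax : ∀ A ⊆ G.edgeFinset.filter (x ∉ ·), pottsFun w A ≤ pottsFun w F' := fun A hA => by
    have hAx : ∀ e ∈ A, x ∉ e := fun e he => (mem_filter.mp (hA he)).2
    simpa [pottsFunOn_eq_pottsFun_sub_one w hAx, pottsFunOn_eq_pottsFun_sub_one w hF'x]
      using hopt A hA
  refine ⟨union_subset hF'G (filter_subset _ _), fun A hA => ?_⟩
  have hxW' : {x} ∈ (compPartition F').filter (· ⊆ compClass (A ∪ F') x) :=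
    mem_filter.mpr ⟨compClass_eq_singleton hF'x ▸ compClass_mem_compPartition F' x,
      singleton_subset_iff.mpr self_mem_compClass⟩
  have h_union := pottsFun_le_pottsFun_union_s11 hF' hmax A
  have h_superset := pottsFun_add_card_le hw hmax hF'x subset_union_right (union_subset hA hF'G)
  have h_min := hmin _ (filter_subset _ _) hxW'
  have h_merge := compCount_add_one_le_union_add_card h𝒲 ⟨_, hx𝒲⟩ fun _ he _ ha =>
    exists_mem_of_mem_crossEdges (G := G) he ha
  have h_sum := sum_union (disjoint_crossEdges (G := G) h𝒲) (f := w)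
  have h_merge' : (compCount F' : ℝ) + 1 ≤ compCount (F' ∪ crossEdges G 𝒲) + 𝒲.card := by
    exact_mod_cast h_merge
  simp only [pottsFun] at h_union h_superset ⊢
  linarith
end
end
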